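/- arXiv:math/0204276 — 3 statements merged into one kernel-verified Lean document; each statement's English description precedes it below -/
import Mathlib

section
/- Let N ≥ 1 and let a : ℤ → ℝ. Define p(x) = ∑_{k=1}^{N} a k * x^k, q(x) = ∑_{k=1}^{N} a (-k) * x^k, p̃(x) = ∑_{k=1}^{N} a (N+1-k) * x^k, q̃(x) = ∑_{k=1}^{N} a (-(N+1-k)) * x^k. If the (N+1)×(N+1) real Toeplitz matrix T with entries T j k = a (j - k) is normal (T * Tᵀ = Tᵀ * T), then p(x) * p̃(x) = q(x) * q̃(x) for all real x. -/
/-!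
Writing p̃(x) = ∑ₗ a(l) x^(N+1-l), the coefficient of x^(N+1+d) in p p̃ is the lag-d
autocorrelation ∑_{k-l=d} a(k) a(l) of a on the window [1, N], and the coefficient in q q̃ is
that of k ↦ a(-k). Comparing the (0, d) entries of T Tᵀ and Tᵀ T gives
∑_{m=0}^{N} a(-m) a(d-m) = ∑_{m=0}^{N} a(m) a(m-d); the terms with m ≤ d match under
m ↦ d - m, and the remaining terms say that the two autocorrelations agree at lag d.
-/

open Matrix Finset

variable {R : Type*} [CommRing R]

def windowAutocorr (b : ℤ → R) (N : ℕ) (d : ℤ) : R :=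
  ∑ k ∈ Icc 1 N, ∑ l ∈ Icc 1 N, if (k : ℤ) - l = d then b k * b l else 0

theorem windowAutocorr_neg (b : ℤ → R) (N : ℕ) (d : ℤ) :
    windowAutocorr b N (-d) = windowAutocorr b N d := by
  rw [windowAutocorr, windowAutocorr, sum_comm]
  refine sum_congr rfl fun l _ => sum_congr rfl fun k _ => ?_
  have hswap : (k : ℤ) - l = -d ↔ (l : ℤ) - k = d := by omega
  simp only [hswap, mul_comm (b k)]

theorem windowAutocorr_natCast (b : ℤ → R) (N n : ℕ) :
    windowAutocorr b N n = ∑ k ∈ Icc 1 (N - n), b (k + n) * b k := by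
  have hwindow : (Icc 1 N).filter (· + n ≤ N) = Icc 1 (N - n) := by
    ext k; simp only [mem_filter, mem_Icc]; omega
  rw [windowAutocorr, sum_comm, ← hwindow, sum_filter]
  refine sum_congr rfl fun l hl => ?_
  have hk : ∀ k : ℕ, (k : ℤ) - l = n ↔ k = l + n := by omega
  rw [mem_Icc] at hl
  simp only [hk, sum_ite_eq', mem_Icc, Nat.cast_add]
  exact if_congr (by omega) rfl rfl

theorem sum_Icc_reflect {M : Type*} [AddCommMonoid M] (f : ℕ → M) (N : ℕ) :
    ∑ k ∈ Icc 1 N, f (N + 1 - k) = ∑ k ∈ Icc 1 N, f k := by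
  rw [← Ico_add_one_right_eq_Icc, sum_Ico_reflect f 1 (n := N + 1) (m := N + 1) (by omega)]
  simp

theorem sum_mul_sum_reflect_eq_sum_windowAutocorr (b : ℤ → R) (N : ℕ) (x : R) :
    (∑ k ∈ Icc 1 N, b k * x ^ k) * ∑ k ∈ Icc 1 N, b (N + 1 - k) * x ^ k =
      ∑ t ∈ range (2 * N + 2), windowAutocorr b N (t - (N + 1)) * x ^ t := by
  have hreflect :
      ∑ k ∈ Icc 1 N, b (N + 1 - k) * x ^ k = ∑ l ∈ Icc 1 N, b l * x ^ (N + 1 - l) := by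
    rw [← sum_Icc_reflect]
    refine sum_congr rfl fun l hl => ?_
    rw [mem_Icc] at hl
    rw [show ((N : ℤ) + 1 - (N + 1 - l : ℕ)) = l by omega]
  rw [hreflect, sum_mul_sum]
  simp only [windowAutocorr, sum_mul]
  rw [sum_comm (s := range _)]
  refine sum_congr rfl fun k hk => ?_
  rw [sum_comm (s := range _)]
  refine sum_congr rfl fun l hl => ?_
  rw [mem_Icc] at hk hl
  have ht : ∀ t : ℕ, (k : ℤ) - l = t - (N + 1) ↔ k + (N + 1 - l) = t := by omega
  simp only [ht, ite_mul, zero_mul, sum_ite_eq, mem_range]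
  rw [if_pos (by omega), pow_add]
  ring

theorem sum_Icc_shift_mul_eq_of_toeplitz_normal {N : ℕ} {a : ℤ → R}
    {T : Matrix (Fin (N + 1)) (Fin (N + 1)) R} (hT : ∀ j k : Fin (N + 1), T j k = a (j - k))
    (hnormal : T * Tᵀ = Tᵀ * T) {d : ℕ} (hd : d ≤ N) :
    ∑ k ∈ Icc 1 (N - d), a (k + d) * a k = ∑ k ∈ Icc 1 (N - d), a (-(k + d)) * a (-k) := by
  have hrow := congrFun (congrFun hnormal 0) ⟨d, by omega⟩
  simp only [mul_apply, transpose_apply, hT, Fin.val_zero, Nat.cast_zero, zero_sub,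
    sub_zero] at hrow
  rw [Fin.sum_univ_eq_sum_range (fun m => a (-m) * a (d - m)),
    Fin.sum_univ_eq_sum_range (fun m => a m * a (m - d)), show N + 1 = d + 1 + (N - d) by omega,
    sum_range_add _ (d + 1), sum_range_add _ (d + 1)] at hrow
  have hhead :
      ∑ m ∈ range (d + 1), a (-m) * a (d - m) = ∑ m ∈ range (d + 1), a m * a (m - d) := by
    rw [← sum_range_reflect (fun m => a m * a (m - d))]
    refine sum_congr rfl fun m hm => ?_
    rw [mem_range] at hm
    rw [show ((d + 1 - 1 - m : ℕ) : ℤ) = d - m by omega, sub_sub_cancel_left, mul_comm]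
  rw [hhead, add_right_inj] at hrow
  simp only [← Ico_add_one_right_eq_Icc, sum_Ico_eq_sum_range, Nat.add_sub_cancel]
  convert hrow.symm using 2 with k hk <;> push_cast <;> ring_nf

theorem windowAutocorr_eq_of_toeplitz_normal {N : ℕ} {a : ℤ → R}
    {T : Matrix (Fin (N + 1)) (Fin (N + 1)) R} (hT : ∀ j k : Fin (N + 1), T j k = a (j - k))
    (hnormal : T * Tᵀ = Tᵀ * T) (d : ℤ) :
    windowAutocorr a N d = windowAutocorr (fun k => a (-k)) N d := by
  obtain ⟨n, rfl | rfl⟩ := d.eq_nat_or_neg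
  all_goals
    simp only [windowAutocorr_neg, windowAutocorr_natCast]
    rcases le_or_gt n N with hn | hn
    · exact sum_Icc_shift_mul_eq_of_toeplitz_normal hT hnormal hn
    · simp [Nat.sub_eq_zero_of_le hn.le]

theorem real_normal_toeplitz_ppt_eq_qqt_general (N : ℕ) (a : ℤ → ℝ)
    (p q pt qt : ℝ → ℝ)
    (hp : ∀ x : ℝ, p x = ∑ k ∈ Finset.Icc 1 N, a (k : ℤ) * x ^ k)
    (hq : ∀ x : ℝ, q x = ∑ k ∈ Finset.Icc 1 N, a (-(k : ℤ)) * x ^ k)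
    (hpt : ∀ x : ℝ, pt x = ∑ k ∈ Finset.Icc 1 N, a ((N : ℤ) + 1 - (k : ℤ)) * x ^ k)
    (hqt : ∀ x : ℝ, qt x = ∑ k ∈ Finset.Icc 1 N, a (-((N : ℤ) + 1 - (k : ℤ))) * x ^ k)
    (T : Matrix (Fin (N + 1)) (Fin (N + 1)) ℝ)
    (hT : ∀ j k : Fin (N + 1), T j k = a ((j : ℤ) - (k : ℤ)))
    (hnormal : T * Tᵀ = Tᵀ * T) :
    ∀ x : ℝ, p x * pt x = q x * qt x := by
  intro x
  rw [hp, hpt, hq, hqt, sum_mul_sum_reflect_eq_sum_windowAutocorr,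
    sum_mul_sum_reflect_eq_sum_windowAutocorr (fun k => a (-k))]
  simp only [windowAutocorr_eq_of_toeplitz_normal hT hnormal]

theorem real_normal_toeplitz_ppt_eq_qqt (N : ℕ) (hN : 1 ≤ N) (a : ℤ → ℝ)
    (p q pt qt : ℝ → ℝ)
    (hp : ∀ x : ℝ, p x = ∑ k ∈ Finset.Icc 1 N, a (k : ℤ) * x ^ k)
    (hq : ∀ x : ℝ, q x = ∑ k ∈ Finset.Icc 1 N, a (-(k : ℤ)) * x ^ k)
    (hpt : ∀ x : ℝ, pt x = ∑ k ∈ Finset.Icc 1 N, a ((N : ℤ) + 1 - (k : ℤ)) * x ^ k)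
    (hqt : ∀ x : ℝ, qt x = ∑ k ∈ Finset.Icc 1 N, a (-((N : ℤ) + 1 - (k : ℤ))) * x ^ k)
    (T : Matrix (Fin (N + 1)) (Fin (N + 1)) ℝ)
    (hT : ∀ j k : Fin (N + 1), T j k = a ((j : ℤ) - (k : ℤ)))
    (hnormal : T * Tᵀ = Tᵀ * T) :
    ∀ x : ℝ, p x * pt x = q x * qt x :=
  real_normal_toeplitz_ppt_eq_qqt_general N a p q pt qt hp hq hpt hqt T hT hnormal
end

section
/- Let N ≥ 1 and let a : ℤ → ℝ. Define p(x) = ∑_{k=1}^{N} a k * x^k, q(x) = ∑_{k=1}^{N} a (-k) * x^k, and q̃(x) = ∑_{k=1}^{N} a (-(N+1-k)) * x^k. If the (N+1)×(N+1) real Toeplitz matrix T with entries T j k = a (j - k) is normal (T * Tᵀ = Tᵀ * T), then for all real x: (p(x)^2 - q(x)^2) * (p(x)^2 - q̃(x)^2) = 0. -/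
/-!
Comparing the entries `(i + 1, l + 1)` and `(i, l)` of `T Tᵀ = Tᵀ T` telescopes the two sums to
`u i u l + u i' u l' = v i v l + v i' v l'`, where `u i = a (i + 1)`, `v i = a (-(i + 1))` and
`i' = N - 1 - i` is the reflection of `Fin N`. Adding and subtracting this identity at `(i, l')`
shows that the outer squares of the symmetric parts `u + u ∘ rev`, `v + v ∘ rev` agree, and so do
those of the antisymmetric parts. Hence each part of `v` is `±` the same part of `u`, so `v` is one
of `u`, `-u`, `u ∘ rev`, `-(u ∘ rev)`, that is `q = ±p` or `q̃ = ±p`.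
-/

open Matrix Finset

theorem eq_or_eq_neg_of_mul_eq_mul {ι R : Type*} [CommRing R] [NoZeroDivisors R] {x y : ι → R}
    (h : ∀ i k, y i * y k = x i * x k) : y = x ∨ y = -x := by
  by_cases hx : x = 0
  · left
    funext i
    simpa [hx] using h i i
  obtain ⟨i, hi⟩ := Function.ne_iff.mp hx
  rcases mul_self_eq_mul_self_iff.mp (h i i) with hyi | hyi
  · left
    funext k
    exact mul_left_cancel₀ hi (by linear_combination h i k - y k * hyi)
  · right
    funext k
    exact mul_left_cancel₀ hi (by simp only [Pi.neg_apply]; linear_combination y k * hyi - h i k)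

theorem eq_or_eq_neg_or_eq_comp_or_eq_neg_comp {ι K : Type*} [Field K] [CharZero K]
    {σ : ι → ι} (hσ : Function.Involutive σ) {u v : ι → K}
    (h : ∀ i k, u i * u k + u (σ i) * u (σ k) = v i * v k + v (σ i) * v (σ k)) :
    v = u ∨ v = -u ∨ v = u ∘ σ ∨ v = -(u ∘ σ) := by
  have hσk (i k : ι) := hσ k ▸ h i (σ k)
  have hsym (i k : ι) :
      (v i + v (σ i)) * (v k + v (σ k)) = (u i + u (σ i)) * (u k + u (σ k)) := by
    linear_combination -h i k - hσk i k
  have hanti (i k : ι) :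
      (v i - v (σ i)) * (v k - v (σ k)) = (u i - u (σ i)) * (u k - u (σ k)) := by
    linear_combination -h i k + hσk i k
  rcases eq_or_eq_neg_of_mul_eq_mul hsym with hs | hs <;>
    rcases eq_or_eq_neg_of_mul_eq_mul hanti with hd | hd <;>
    simp only [funext_iff, Pi.neg_apply, Function.comp_apply] at hs hd ⊢
  · exact Or.inl fun i => by linear_combination (hs i + hd i) / 2
  · exact Or.inr <| Or.inr <| Or.inl fun i => by linear_combination (hs i + hd i) / 2
  · exact Or.inr <| Or.inr <| Or.inr fun i => by linear_combination (hs i + hd i) / 2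
  · exact Or.inr <| Or.inl fun i => by linear_combination (hs i + hd i) / 2

theorem Fin.natCast_val_rev_add_one {N : ℕ} (i : Fin N) : ((i.rev : ℕ) : ℤ) + 1 = N - i := by
  rw [Fin.val_rev]; omega

section Toeplitz

variable {R : Type*} [CommRing R]

def toeplitz (a : ℤ → R) (n : ℕ) : Matrix (Fin n) (Fin n) R :=
  Matrix.of fun j k => a (j - k)

theorem toeplitz_mul_transpose_apply (a : ℤ → R) (n : ℕ) (j k : Fin n) :
    (toeplitz a n * (toeplitz a n)ᵀ) j k = ∑ m ∈ range n, a (j - m) * a (k - m) := by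
  simp [toeplitz, mul_apply, Fin.sum_univ_eq_sum_range (fun m => a (j - m) * a (k - m))]

theorem transpose_mul_toeplitz_apply (a : ℤ → R) (n : ℕ) (j k : Fin n) :
    ((toeplitz a n)ᵀ * toeplitz a n) j k = ∑ m ∈ range n, a (m - j) * a (m - k) := by
  simp [toeplitz, mul_apply, Fin.sum_univ_eq_sum_range (fun m => a (m - j) * a (m - k))]

theorem toeplitz_mul_transpose_succ_sub_castSucc (a : ℤ → R) {N : ℕ} (i l : Fin N) :
    (toeplitz a (N + 1) * (toeplitz a (N + 1))ᵀ) i.succ l.succ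
      - (toeplitz a (N + 1) * (toeplitz a (N + 1))ᵀ) i.castSucc l.castSucc
      = a (i + 1) * a (l + 1) - a (i - N) * a (l - N) := by
  rw [toeplitz_mul_transpose_apply, toeplitz_mul_transpose_apply, ← sum_sub_distrib]
  refine (sum_congr rfl fun m _ => ?_).trans
    ((sum_range_sub' (fun m : ℕ => a (i + 1 - m) * a (l + 1 - m)) _).trans ?_) <;>
  · push_cast [Fin.val_succ, Fin.val_castSucc]; ring_nf

theorem transpose_mul_toeplitz_succ_sub_castSucc (a : ℤ → R) {N : ℕ} (i l : Fin N) :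
    ((toeplitz a (N + 1))ᵀ * toeplitz a (N + 1)) i.succ l.succ
      - ((toeplitz a (N + 1))ᵀ * toeplitz a (N + 1)) i.castSucc l.castSucc
      = a (-(i + 1)) * a (-(l + 1)) - a (N - i) * a (N - l) := by
  rw [transpose_mul_toeplitz_apply, transpose_mul_toeplitz_apply, ← sum_sub_distrib]
  refine (sum_congr rfl fun m _ => ?_).trans
    ((sum_range_sub' (fun m : ℕ => a (m - (i + 1)) * a (m - (l + 1))) _).trans ?_) <;>
  · push_cast [Fin.val_succ, Fin.val_castSucc]; ring_nf

theorem normal_toeplitz_reflection_identity (a : ℤ → R) {N : ℕ}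
    (h : toeplitz a (N + 1) * (toeplitz a (N + 1))ᵀ
      = (toeplitz a (N + 1))ᵀ * toeplitz a (N + 1))
    (i l : Fin N) :
    a (i + 1) * a (l + 1) + a (i.rev + 1) * a (l.rev + 1)
      = a (-(i + 1)) * a (-(l + 1)) + a (-(i.rev + 1)) * a (-(l.rev + 1)) := by
  have h₁ := toeplitz_mul_transpose_succ_sub_castSucc a i l
  have h₂ := transpose_mul_toeplitz_succ_sub_castSucc a i l
  rw [h] at h₁
  rw [Fin.natCast_val_rev_add_one, Fin.natCast_val_rev_add_one, neg_sub, neg_sub]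
  linear_combination h₂ - h₁

end Toeplitz

theorem sum_Icc_one_eq_sum_fin {M : Type*} [AddCommMonoid M] (N : ℕ) (f : ℕ → M) :
    ∑ k ∈ Icc 1 N, f k = ∑ i : Fin N, f (i + 1) := by
  rw [← Ico_add_one_right_eq_Icc, sum_Ico_eq_sum_range,
    Fin.sum_univ_eq_sum_range (fun i => f (i + 1))]
  simp only [add_tsub_cancel_right, add_comm]

theorem real_normal_toeplitz_factorization_general (N : ℕ) (a : ℤ → ℝ)
    (p q qt : ℝ → ℝ)
    (hp : ∀ x : ℝ, p x = ∑ k ∈ Finset.Icc 1 N, a (k : ℤ) * x ^ k)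
    (hq : ∀ x : ℝ, q x = ∑ k ∈ Finset.Icc 1 N, a (-(k : ℤ)) * x ^ k)
    (hqt : ∀ x : ℝ, qt x = ∑ k ∈ Finset.Icc 1 N, a (-((N : ℤ) + 1 - (k : ℤ))) * x ^ k)
    (T : Matrix (Fin (N + 1)) (Fin (N + 1)) ℝ)
    (hT : ∀ j k : Fin (N + 1), T j k = a ((j : ℤ) - (k : ℤ)))
    (hnormal : T * Tᵀ = Tᵀ * T) :
    ∀ x : ℝ, (p x ^ 2 - q x ^ 2) * (p x ^ 2 - qt x ^ 2) = 0 := by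
  obtain rfl : T = toeplitz a (N + 1) := Matrix.ext hT
  intro x
  have hp' : p x = ∑ i : Fin N, a (i + 1) * x ^ (i + 1 : ℕ) := by
    rw [hp, sum_Icc_one_eq_sum_fin]; push_cast; rfl
  have hq' : q x = ∑ i : Fin N, a (-(i + 1)) * x ^ (i + 1 : ℕ) := by
    rw [hq, sum_Icc_one_eq_sum_fin]; push_cast; rfl
  have hqt' : qt x = ∑ i : Fin N, a (-(i.rev + 1)) * x ^ (i + 1 : ℕ) := by
    rw [hqt, sum_Icc_one_eq_sum_fin]
    refine sum_congr rfl fun i _ => ?_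
    rw [Fin.natCast_val_rev_add_one]; push_cast; ring_nf
  have hcases : q x = p x ∨ q x = -p x ∨ qt x = p x ∨ qt x = -p x := by
    rcases eq_or_eq_neg_or_eq_comp_or_eq_neg_comp Fin.rev_involutive
      (normal_toeplitz_reflection_identity a hnormal) with h | h | h | h <;>
      simp only [funext_iff, Pi.neg_apply, Function.comp_apply] at h
    · exact Or.inl (by simp only [hq', hp', h])
    · exact Or.inr <| Or.inl (by simp only [hq', hp', h, neg_mul, sum_neg_distrib])
    · exact Or.inr <| Or.inr <| Or.inl (by simp only [hqt', hp', h, Fin.rev_rev])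
    · exact Or.inr <| Or.inr <| Or.inr
        (by simp only [hqt', hp', h, Fin.rev_rev, neg_mul, sum_neg_distrib])
  rcases hcases with h | h | h | h <;> rw [h] <;> ring

theorem real_normal_toeplitz_factorization (N : ℕ) (hN : 1 ≤ N) (a : ℤ → ℝ)
    (p q qt : ℝ → ℝ)
    (hp : ∀ x : ℝ, p x = ∑ k ∈ Finset.Icc 1 N, a (k : ℤ) * x ^ k)
    (hq : ∀ x : ℝ, q x = ∑ k ∈ Finset.Icc 1 N, a (-(k : ℤ)) * x ^ k)
    (hqt : ∀ x : ℝ, qt x = ∑ k ∈ Finset.Icc 1 N, a (-((N : ℤ) + 1 - (k : ℤ))) * x ^ k)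
    (T : Matrix (Fin (N + 1)) (Fin (N + 1)) ℝ)
    (hT : ∀ j k : Fin (N + 1), T j k = a ((j : ℤ) - (k : ℤ)))
    (hnormal : T * Tᵀ = Tᵀ * T) :
    ∀ x : ℝ, (p x ^ 2 - q x ^ 2) * (p x ^ 2 - qt x ^ 2) = 0 :=
  real_normal_toeplitz_factorization_general N a p q qt hp hq hqt T hT hnormal
end

section
/- Let N ≥ 1 and let a : ℤ → ℝ. Suppose one of the following four conditions holds: (i) a(-k) = a k for all 1 ≤ k ≤ N; (ii) a(-k) = -a k for all 1 ≤ k ≤ N; (iii) a(-k) = a(N + 1 - k) for all 1 ≤ k ≤ N; (iv) a(-k) = -a(N + 1 - k) for all 1 ≤ k ≤ N. Then the (N+1)×(N+1) real Toeplitz matrix T with entries T j k = a (j - k) is normal: T * Tᵀ = Tᵀ * T. -/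
/-!
In cases (i) and (ii), with `ε = 1` resp. `ε = -1`, the transpose is `Tᵀ = ε T + (1 - ε) a₀ I`, a
polynomial in `T`. In cases (iii) and (iv), with `n = N + 1`, `T` is an `ε`-circulant: `a` extends
from `(-n, n)` to some `s : ℤ → ℝ` with `s (x + n) = ε s x`. Then `(T Tᵀ) j k = ∑ₘ g (j + k - m)`
and `(Tᵀ T) j k = ∑ₘ g m` for `g m = s (m - j) s (m - k)`, which is `n`-periodic since `ε² = 1`,
and `m ↦ j + k - m` permutes the residues modulo `n`.
-/

theorem Function.Periodic.eq_of_intModEq {M : Type*} {g : ℤ → M} {n : ℤ} (hg : Periodic g n)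
    {a b : ℤ} (h : a ≡ b [ZMOD n]) : g a = g b := by
  obtain ⟨q, hq⟩ := Int.modEq_iff_dvd.mp h
  rw [show a = b - q • n by rw [smul_eq_mul]; linarith, hg.sub_zsmul_eq]

theorem Fin.intCast_add_sub_modEq {n : ℕ} [NeZero n] (j k m : Fin n) :
    ((j + k - m : Fin n) : ℤ) ≡ j + k - m [ZMOD n] := by
  rw [← ZMod.intCast_eq_intCast_iff]
  push_cast
  simp only [Fin.val_sub, Fin.val_add, Nat.add_mod_mod, ZMod.natCast_mod, Nat.cast_add,
    Nat.cast_sub m.is_le', ZMod.natCast_self, zero_sub]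
  ring

theorem exists_extension_add_eq_mul {R : Type*} [CommRing R] {n : ℕ} [NeZero n] (a : ℤ → R) (ε : Rˣ)
    (ha : ∀ t : ℤ, -n < t → t < 0 → a (t + n) = ε * a t) :
    ∃ s : ℤ → R, (∀ x : ℤ, s (x + n) = ε * s x) ∧ ∀ t : ℤ, -n < t → t < n → s t = a t := by
  have hn : (0 : ℤ) < n := by exact_mod_cast NeZero.pos n
  refine ⟨fun t => ((ε ^ (t / n : ℤ) : Rˣ) : R) * a (t % n), fun x => ?_, fun t ht₁ ht₂ => ?_⟩
  · dsimp only
    rw [Int.add_ediv_of_dvd_right dvd_rfl, Int.ediv_self hn.ne', Int.add_emod_right,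
      zpow_add_one, Units.val_mul]
    ring
  dsimp only
  rcases lt_or_ge t 0 with ht | ht
  · have hmod : t % n = t + n := by
      rw [← Int.add_emod_right, Int.emod_eq_of_lt (by omega) (by omega)]
    have hdiv : t / n = -1 := by
      have := Int.emod_add_mul_ediv t n
      rw [hmod] at this
      nlinarith
    rw [hdiv, hmod, ha t ht₁ ht, ← mul_assoc, ← Units.val_mul, zpow_neg_one, inv_mul_cancel,
      Units.val_one, one_mul]
  · simp only [Int.ediv_eq_zero_of_lt ht ht₂, Int.emod_eq_of_lt ht ht₂, zpow_zero, Units.val_one,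
      one_mul]

namespace Matrix

variable {R : Type*}

def toeplitz (n : ℕ) (a : ℤ → R) : Matrix (Fin n) (Fin n) R :=
  of fun j k => a (j - k)

theorem toeplitz_congr {n : ℕ} {a b : ℤ → R} (h : ∀ t : ℤ, -n < t → t < n → a t = b t) :
    toeplitz n a = toeplitz n b := by
  ext j k
  exact h _ (by omega) (by omega)

variable [CommRing R]

theorem transpose_toeplitz_of_neg_eq_mul {n : ℕ} (a : ℤ → R) (ε : R) (hε : ε * ε = 1)
    (ha : ∀ k : ℤ, 0 < k → k < n → a (-k) = ε * a k) :
    (toeplitz n a)ᵀ = ε • toeplitz n a + ((1 - ε) * a 0) • 1 := by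
  ext j k
  simp only [transpose_apply, toeplitz, of_apply, add_apply, smul_apply, one_apply, smul_eq_mul]
  rcases lt_trichotomy (j : ℤ) k with hjk | hjk | hjk
  · have hne : j ≠ k := by rintro rfl; exact hjk.false
    rw [if_neg hne, ← neg_sub (k : ℤ), ha _ (by omega) (by omega), ← mul_assoc, hε]
    ring
  · obtain rfl : j = k := Fin.ext (by exact_mod_cast hjk)
    simp only [sub_self, if_true]
    ring
  · have hne : j ≠ k := by rintro rfl; exact hjk.false
    rw [if_neg hne, ← neg_sub (j : ℤ), ha _ (by omega) (by omega)]
    ring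

theorem commute_transpose_toeplitz_of_neg_eq_mul {n : ℕ} (a : ℤ → R) (ε : R) (hε : ε * ε = 1)
    (ha : ∀ k : ℤ, 0 < k → k < n → a (-k) = ε * a k) :
    Commute (toeplitz n a) (toeplitz n a)ᵀ := by
  rw [transpose_toeplitz_of_neg_eq_mul a ε hε ha]
  exact ((Commute.refl _).smul_right ε).add_right ((Commute.one_right _).smul_right _)

theorem commute_transpose_toeplitz_of_forall_add_eq_mul {n : ℕ} [NeZero n] (s : ℤ → R) (ε : R)
    (hε : ε * ε = 1) (hs : ∀ x : ℤ, s (x + n) = ε * s x) :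
    Commute (toeplitz n s) (toeplitz n s)ᵀ := by
  ext j k
  simp only [mul_apply, transpose_apply, toeplitz, of_apply]
  set g : ℤ → R := fun m => s (m - j) * s (m - k) with hg_def
  have hg : Function.Periodic g n := fun m => by
    simp only [hg_def, add_sub_right_comm m (n : ℤ), hs]
    linear_combination s (m - j) * s (m - k) * hε
  calc ∑ m : Fin n, s (j - m) * s (k - m) = ∑ m : Fin n, g (j + k - m) := by
        refine Finset.sum_congr rfl fun m _ => ?_
        simp only [hg_def]
        ring_nf
    _ = ∑ m : Fin n, g ((j + k - m : Fin n) : ℤ) :=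
        Finset.sum_congr rfl fun m _ => hg.eq_of_intModEq (Fin.intCast_add_sub_modEq j k m).symm
    _ = ∑ m : Fin n, g m := Equiv.sum_comp (Equiv.subLeft (j + k)) (fun m : Fin n => g m)

theorem commute_transpose_toeplitz_of_add_eq_mul {n : ℕ} [NeZero n] (a : ℤ → R) (ε : Rˣ)
    (hε : ε * ε = 1) (ha : ∀ t : ℤ, -n < t → t < 0 → a (t + n) = ε * a t) :
    Commute (toeplitz n a) (toeplitz n a)ᵀ := by
  obtain ⟨s, hs_add, hs_eq⟩ := exists_extension_add_eq_mul a ε ha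
  rw [← toeplitz_congr hs_eq]
  exact commute_transpose_toeplitz_of_forall_add_eq_mul s ε
    (by rw [← Units.val_mul, hε, Units.val_one]) hs_add

end Matrix

open Matrix

theorem four_types_implies_normal_general (N : ℕ) (a : ℤ → ℝ)
    (T : Matrix (Fin (N + 1)) (Fin (N + 1)) ℝ)
    (hT : ∀ j k : Fin (N + 1), T j k = a ((j : ℤ) - (k : ℤ)))
    (h : (∀ k : ℤ, 1 ≤ k → k ≤ N → a (-k) = a k) ∨
         (∀ k : ℤ, 1 ≤ k → k ≤ N → a (-k) = -a k) ∨
         (∀ k : ℤ, 1 ≤ k → k ≤ N → a (-k) = a ((N : ℤ) + 1 - k)) ∨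
         (∀ k : ℤ, 1 ≤ k → k ≤ N → a (-k) = -a ((N : ℤ) + 1 - k))) :
    T * Tᵀ = Tᵀ * T := by
  obtain rfl : T = toeplitz (N + 1) a := Matrix.ext hT
  rcases h with h | h | h | h
  · refine commute_transpose_toeplitz_of_neg_eq_mul a 1 (one_mul 1) fun k hk₁ hk₂ => ?_
    rw [h k hk₁ (by omega), one_mul]
  · refine commute_transpose_toeplitz_of_neg_eq_mul a (-1) (by norm_num) fun k hk₁ hk₂ => ?_
    rw [h k hk₁ (by omega), neg_one_mul]
  · refine commute_transpose_toeplitz_of_add_eq_mul a 1 (one_mul 1) fun t ht₁ ht₂ => ?_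
    have key := h (-t) (by omega) (by omega)
    rw [neg_neg, sub_neg_eq_add, add_comm] at key
    push_cast
    linear_combination -key
  · refine commute_transpose_toeplitz_of_add_eq_mul a (-1) (by norm_num) fun t ht₁ ht₂ => ?_
    have key := h (-t) (by omega) (by omega)
    rw [neg_neg, sub_neg_eq_add, add_comm] at key
    push_cast
    linear_combination key

theorem four_types_implies_normal (N : ℕ) (hN : 1 ≤ N) (a : ℤ → ℝ)
    (T : Matrix (Fin (N + 1)) (Fin (N + 1)) ℝ)
    (hT : ∀ j k : Fin (N + 1), T j k = a ((j : ℤ) - (k : ℤ)))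
    (h : (∀ k : ℤ, 1 ≤ k → k ≤ N → a (-k) = a k) ∨
         (∀ k : ℤ, 1 ≤ k → k ≤ N → a (-k) = -a k) ∨
         (∀ k : ℤ, 1 ≤ k → k ≤ N → a (-k) = a ((N : ℤ) + 1 - k)) ∨
         (∀ k : ℤ, 1 ≤ k → k ≤ N → a (-k) = -a ((N : ℤ) + 1 - k))) :
    T * Tᵀ = Tᵀ * T :=
  four_types_implies_normal_general N a T hT h
end
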